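/- arXiv:1310.2972 — 3 statements merged into one kernel-verified Lean document; each statement's English description precedes it below -/
import Mathlib

section
/- For all integers r ≥ 2 and d ≥ 1, there exists a finite r-uniform hypergraph that is triangle-free, d-degenerate, and has chromatic number exactly d + 1. -/
open Finset

/-- A hypergraph on vertex set `Fin n`, given by its edge set `E`, is `r`-uniform
if every edge has exactly `r` vertices. -/
def Uniform {n : ℕ} (E : Finset (Finset (Fin n))) (r : ℕ) : Prop :=
  ∀ e ∈ E, e.card = r

/-- The hypergraph with edge set `E` is `d`-degenerate: every nonempty subset `S`
of the vertex set contains a vertex lying in at most `d` edges contained in `S`. -/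
def Degenerate {n : ℕ} (E : Finset (Finset (Fin n))) (d : ℕ) : Prop :=
  ∀ S : Finset (Fin n), S.Nonempty →
    ∃ v ∈ S, (E.filter (fun e => v ∈ e ∧ e ⊆ S)).card ≤ d

/-- `c` is a proper colouring: no edge is monochromatic. -/
def ProperColoring {n : ℕ} (E : Finset (Finset (Fin n))) {k : ℕ}
    (c : Fin n → Fin k) : Prop :=
  ∀ e ∈ E, ∃ u ∈ e, ∃ w ∈ e, c u ≠ c w

/-- The hypergraph admits a proper colouring with `k` colours. -/
def Colorable {n : ℕ} (E : Finset (Finset (Fin n))) (k : ℕ) : Prop :=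
  ∃ c : Fin n → Fin k, ProperColoring E c

/-- An `r`-uniform hypergraph is triangle-free if it has no three pairwise
distinct edges whose union has exactly `r + 1` vertices. -/
def TriangleFree {n : ℕ} (E : Finset (Finset (Fin n))) (r : ℕ) : Prop :=
  ¬ ∃ e₁ ∈ E, ∃ e₂ ∈ E, ∃ e₃ ∈ E,
      e₁ ≠ e₂ ∧ e₁ ≠ e₃ ∧ e₂ ≠ e₃ ∧ (e₁ ∪ e₂ ∪ e₃).card = r + 1

namespace TFD

variable {V : Type*} [DecidableEq V] {W : Type*} [DecidableEq W]

def Unif (E : Finset (Finset V)) (r : ℕ) : Prop := ∀ e ∈ E, e.card = r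

def Degen (E : Finset (Finset V)) (d : ℕ) : Prop :=
  ∀ S : Finset V, S.Nonempty → ∃ v ∈ S, (E.filter (fun e => v ∈ e ∧ e ⊆ S)).card ≤ d

def Colbl (E : Finset (Finset V)) (k : ℕ) : Prop :=
  ∃ c : V → Fin k, ∀ e ∈ E, ∃ u ∈ e, ∃ w ∈ e, c u ≠ c w

def TFree (E : Finset (Finset V)) (r : ℕ) : Prop :=
  ¬ ∃ e₁ ∈ E, ∃ e₂ ∈ E, ∃ e₃ ∈ E,
      e₁ ≠ e₂ ∧ e₁ ≠ e₃ ∧ e₂ ≠ e₃ ∧ (e₁ ∪ e₂ ∪ e₃).card = r + 1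

section Transfer

variable {f : V → W} {E : Finset (Finset V)} {r d k : ℕ}

lemma unif_image (hf : Function.Injective f) (h : Unif E r) : Unif (E.image (fun e => e.image f)) r := by
  intro e' he'
  obtain ⟨e, he, rfl⟩ := mem_image.mp he'
  rw [card_image_of_injective _ hf]; exact h e he

lemma tfree_image (hf : Function.Injective f) (h : TFree E r) : TFree (E.image (fun e => e.image f)) r := by
  rintro ⟨e₁', he₁, e₂', he₂, e₃', he₃, h12, h13, h23, hcard⟩
  obtain ⟨e₁, he₁', rfl⟩ := mem_image.mp he₁
  obtain ⟨e₂, he₂', rfl⟩ := mem_image.mp he₂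
  obtain ⟨e₃, he₃', rfl⟩ := mem_image.mp he₃
  refine h ⟨e₁, he₁', e₂, he₂', e₃, he₃', ?_, ?_, ?_, ?_⟩
  · rintro rfl; exact h12 rfl
  · rintro rfl; exact h13 rfl
  · rintro rfl; exact h23 rfl
  · rw [← image_union, ← image_union, card_image_of_injective _ hf] at hcard
    exact hcard

lemma colbl_back (h : Colbl (E.image (fun e => e.image f)) k) : Colbl E k := by
  obtain ⟨c, hc⟩ := h
  refine ⟨c ∘ f, fun e he => ?_⟩
  obtain ⟨u', hu', w', hw', hne⟩ := hc (e.image f) (mem_image_of_mem _ he)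
  obtain ⟨u, hu, rfl⟩ := mem_image.mp hu'
  obtain ⟨w, hw, rfl⟩ := mem_image.mp hw'
  exact ⟨u, hu, w, hw, hne⟩

lemma degen_image (hf : Function.Injective f) (h : Degen E d) : Degen (E.image (fun e => e.image f)) d := by
  intro S' hS'
  by_cases hc : ∃ w ∈ S', w ∉ Set.range f
  · obtain ⟨w, hwS, hwr⟩ := hc
    refine ⟨w, hwS, ?_⟩
    have : (E.image (fun e => e.image f)).filter (fun e => w ∈ e ∧ e ⊆ S') = ∅ := by
      rw [filter_eq_empty_iff]
      intro e' he'
      obtain ⟨e, _, rfl⟩ := mem_image.mp he'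
      rintro ⟨hw, -⟩
      obtain ⟨u, -, rfl⟩ := mem_image.mp hw
      exact hwr ⟨u, rfl⟩
    rw [this]; simp
  · push_neg at hc
    have hinjOn : Set.InjOn f (f ⁻¹' ↑S') := fun a _ b _ hab => hf hab
    set S : Finset V := S'.preimage f hinjOn with hSdef
    have hSne : S.Nonempty := by
      obtain ⟨w, hw⟩ := hS'
      obtain ⟨v, rfl⟩ := hc w hw
      exact ⟨v, by simp [hSdef, mem_preimage, hw]⟩
    obtain ⟨v, hvS, hvd⟩ := h S hSne
    have himg : S.image f = S' := by
      apply Finset.Subset.antisymm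
      · intro x hx
        obtain ⟨a, ha, rfl⟩ := mem_image.mp hx
        exact (mem_preimage.mp ha)
      · intro x hx
        obtain ⟨v', rfl⟩ := hc x hx
        exact mem_image_of_mem f (mem_preimage.mpr hx)
    refine ⟨f v, himg ▸ mem_image_of_mem f hvS, ?_⟩
    have hset : (E.image (fun e => e.image f)).filter (fun e => f v ∈ e ∧ e ⊆ S')
        = (E.filter (fun e => v ∈ e ∧ e ⊆ S)).image (fun e => e.image f) := by
      ext e'
      simp only [mem_filter, mem_image]
      constructor
      · rintro ⟨⟨e, he, rfl⟩, hfv, hsub⟩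
        refine ⟨e, ⟨he, ?_, ?_⟩, rfl⟩
        · obtain ⟨u, hu, hequ⟩ := mem_image.mp hfv
          rwa [hf hequ] at hu
        · intro x hx
          exact mem_preimage.mpr (hsub (mem_image_of_mem f hx))
      · rintro ⟨e, ⟨he, hv, hsub⟩, rfl⟩
        refine ⟨⟨e, he, rfl⟩, mem_image_of_mem f hv, ?_⟩
        intro x hx
        obtain ⟨u, hu, rfl⟩ := mem_image.mp hx
        exact mem_preimage.mp (hsub hu)
    rw [hset, card_image_of_injective _ (Finset.image_injective hf)]
    exact hvd

end Transfer

lemma colbl_mono {E : Finset (Finset V)} {k k' : ℕ} (hkk : k ≤ k') (h : Colbl E k) :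
    Colbl E k' := by
  obtain ⟨c, hc⟩ := h
  refine ⟨Fin.castLE hkk ∘ c, fun e he => ?_⟩
  obtain ⟨u, hu, w, hw, hne⟩ := hc e he
  exact ⟨u, hu, w, hw, fun hcontra => hne (Fin.castLE_injective hkk hcontra)⟩

lemma colbl_of_degen [Fintype V] {E : Finset (Finset V)} {r d : ℕ} (hr : 2 ≤ r)
    (hU : Unif E r) (hD : Degen E d) : Colbl E (d + 1) := by
  suffices h : ∀ S : Finset V, ∃ c : V → Fin (d+1),
      ∀ e ∈ E, e ⊆ S → ∃ u ∈ e, ∃ w ∈ e, c u ≠ c w by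
    obtain ⟨c, hc⟩ := h univ
    exact ⟨c, fun e he => hc e he (subset_univ e)⟩
  intro S
  induction S using Finset.strongInduction with
  | _ S ih =>
    by_cases hS : S.Nonempty
    · obtain ⟨v, hvS, hvd⟩ := hD S hS
      obtain ⟨c₀, hc₀⟩ := ih (S.erase v) (erase_ssubset hvS)
      set F := E.filter (fun e => v ∈ e ∧ e ⊆ S) with hF
      set wch : Finset V → V := fun e =>
        if h : (e.erase v).Nonempty then h.choose else v with hwch
      set Bad := F.image (fun e => c₀ (wch e)) with hBad
      have hBadcard : Bad.card ≤ d := le_trans card_image_le hvd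
      have hex : ∃ y : Fin (d+1), y ∉ Bad := by
        by_contra hcon
        push_neg at hcon
        have hsub : (univ : Finset (Fin (d+1))) ⊆ Bad := fun y _ => hcon y
        have := card_le_card hsub
        simp only [card_univ, Fintype.card_fin] at this
        omega
      obtain ⟨y, hy⟩ := hex
      refine ⟨Function.update c₀ v y, fun e he hes => ?_⟩
      by_cases hv : v ∈ e
      · have heF : e ∈ F := mem_filter.mpr ⟨he, hv, hes⟩
        have hne : (e.erase v).Nonempty := by
          rw [← card_pos, card_erase_of_mem hv, hU e he]
          omega
        have hwmem : wch e ∈ e.erase v := by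
          rw [hwch]; simp only [dif_pos hne]; exact hne.choose_spec
        have hwv : wch e ≠ v := (mem_erase.mp hwmem).1
        refine ⟨v, hv, wch e, (mem_erase.mp hwmem).2, ?_⟩
        rw [Function.update_self, Function.update_of_ne hwv]
        intro hcontra
        exact hy (hcontra ▸ mem_image_of_mem _ heF)
      · have hsub : e ⊆ S.erase v :=
          fun x hx => mem_erase.mpr ⟨fun h => hv (h ▸ hx), hes hx⟩
        obtain ⟨u, hu, w, hw, hne⟩ := hc₀ e he hsub
        refine ⟨u, hu, w, hw, ?_⟩
        rwa [Function.update_of_ne (by rintro rfl; exact hv hu),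
          Function.update_of_ne (by rintro rfl; exact hv hw)]
    · refine ⟨fun _ => ⟨0, by omega⟩, fun e he hes => ?_⟩
      rw [not_nonempty_iff_eq_empty] at hS
      subst hS
      have := hU e he
      rw [subset_empty] at hes
      subst hes
      simp at this
      omega

namespace Step

variable (r n k : ℕ)

/-- block size total -/
def m : ℕ := n * (r - 1)
/-- number of "ground" vertices -/
def p : ℕ := (k + 1) * (m r n - 1) + 1

abbrev Vt := Fin (p r n k) ⊕ (Finset (Fin (p r n k)) × Fin n)

def copyEdge (T : Finset (Fin (p r n k))) (e : Finset (Fin n)) : Finset (Vt r n k) :=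
  e.image (fun v => Sum.inr (T, v))

lemma inr_copy_injective (T : Finset (Fin (p r n k))) :
    Function.Injective (fun v : Fin n => (Sum.inr (T, v) : Vt r n k)) := by
  intro a b h; simpa using h

lemma mem_copyEdge {T T' : Finset (Fin (p r n k))} {e : Finset (Fin n)} {v : Fin n} :
    (Sum.inr (T', v) : Vt r n k) ∈ copyEdge r n k T e ↔ T' = T ∧ v ∈ e := by
  simp only [copyEdge, mem_image]
  constructor
  · rintro ⟨u, hu, h⟩
    obtain ⟨h1, h2⟩ := Prod.mk.injEq .. ▸ (Sum.inr.inj h)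
    exact ⟨h1.symm, h2 ▸ hu⟩
  · rintro ⟨rfl, hv⟩; exact ⟨v, hv, rfl⟩

lemma inl_notMem_copyEdge {T : Finset (Fin (p r n k))} {e : Finset (Fin n)}
    {b : Fin (p r n k)} : (Sum.inl b : Vt r n k) ∉ copyEdge r n k T e := by
  simp [copyEdge]

lemma shape_copyEdge {T : Finset (Fin (p r n k))} {e : Finset (Fin n)} {x : Vt r n k}
    (hx : x ∈ copyEdge r n k T e) : ∃ v ∈ e, x = Sum.inr (T, v) := by
  simp only [copyEdge, mem_image] at hx
  obtain ⟨v, hv, rfl⟩ := hx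
  exact ⟨v, hv, rfl⟩

lemma card_copyEdge (T : Finset (Fin (p r n k))) (e : Finset (Fin n)) :
    (copyEdge r n k T e).card = e.card :=
  card_image_of_injective _ (inr_copy_injective r n k T)

lemma blockElt_bound (j : Fin n) (t : Fin (r - 1)) :
    (j : ℕ) * (r - 1) + (t : ℕ) < m r n := by
  have h1 : (j : ℕ) + 1 ≤ n := j.2
  have h2 : (t : ℕ) < r - 1 := t.2
  calc (j : ℕ) * (r - 1) + (t : ℕ) < (j : ℕ) * (r - 1) + (r - 1) := by omega
    _ = ((j : ℕ) + 1) * (r - 1) := by ring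
    _ ≤ n * (r - 1) := Nat.mul_le_mul_right _ h1

def blockElt (T : Finset (Fin (p r n k))) (hT : T.card = m r n) (j : Fin n)
    (t : Fin (r - 1)) : Fin (p r n k) :=
  (T.orderIsoOfFin hT ⟨(j : ℕ) * (r - 1) + (t : ℕ), blockElt_bound r n j t⟩ : Fin (p r n k))

lemma blockElt_mem (T : Finset (Fin (p r n k))) (hT : T.card = m r n) (j : Fin n)
    (t : Fin (r - 1)) : blockElt r n k T hT j t ∈ T :=
  (T.orderIsoOfFin hT _).2

lemma blockElt_inj {T : Finset (Fin (p r n k))} {hT hT' : T.card = m r n} {j j' : Fin n}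
    {t t' : Fin (r - 1)}
    (h : blockElt r n k T hT j t = blockElt r n k T hT' j' t') : j = j' ∧ t = t' := by
  have h2 : ((j : ℕ) * (r - 1) + (t : ℕ)) = ((j' : ℕ) * (r - 1) + (t' : ℕ)) := by
    have := (T.orderIsoOfFin hT).injective (Subtype.ext h)
    exact congrArg Fin.val this
  have h2t : (t : ℕ) < r - 1 := t.2
  have h2t' : (t' : ℕ) < r - 1 := t'.2
  have hjj : (j : ℕ) = (j' : ℕ) := by
    rcases Nat.lt_trichotomy (j : ℕ) (j' : ℕ) with hlt | heq | hgt
    · exfalso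
      have : ((j : ℕ) + 1) * (r - 1) ≤ (j' : ℕ) * (r - 1) := Nat.mul_le_mul_right _ hlt
      nlinarith [this, h2, h2t]
    · exact heq
    · exfalso
      have : ((j' : ℕ) + 1) * (r - 1) ≤ (j : ℕ) * (r - 1) := Nat.mul_le_mul_right _ hgt
      nlinarith [this, h2, h2t']
  refine ⟨Fin.ext hjj, Fin.ext ?_⟩
  rw [hjj] at h2
  omega

def Bl (T : Finset (Fin (p r n k))) (hT : T.card = m r n) (j : Fin n) : Finset (Vt r n k) :=
  (univ : Finset (Fin (r - 1))).image (fun t => Sum.inl (blockElt r n k T hT j t))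

lemma mem_Bl {T : Finset (Fin (p r n k))} {hT : T.card = m r n} {j : Fin n} {x : Vt r n k} :
    x ∈ Bl r n k T hT j ↔ ∃ t, x = Sum.inl (blockElt r n k T hT j t) := by
  simp only [Bl, mem_image, mem_univ, true_and]
  constructor
  · rintro ⟨t, rfl⟩; exact ⟨t, rfl⟩
  · rintro ⟨t, rfl⟩; exact ⟨t, rfl⟩

lemma inr_notMem_Bl {T : Finset (Fin (p r n k))} {hT : T.card = m r n} {j : Fin n}
    {x : Finset (Fin (p r n k)) × Fin n} : (Sum.inr x : Vt r n k) ∉ Bl r n k T hT j := by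
  simp [Bl]

lemma card_Bl (T : Finset (Fin (p r n k))) (hT : T.card = m r n) (j : Fin n) :
    (Bl r n k T hT j).card = r - 1 := by
  rw [Bl, card_image_of_injective, card_univ, Fintype.card_fin]
  intro a b h
  exact (blockElt_inj r n k (Sum.inl.inj h)).2

lemma Bl_disjoint {T : Finset (Fin (p r n k))} {hT hT' : T.card = m r n} {j j' : Fin n}
    (hjj : j ≠ j') : Disjoint (Bl r n k T hT j) (Bl r n k T hT' j') := by
  rw [disjoint_left]
  intro x hx hx'
  obtain ⟨t, rfl⟩ := (mem_Bl r n k).mp hx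
  obtain ⟨t', ht'⟩ := (mem_Bl r n k).mp hx'
  exact hjj (blockElt_inj r n k (Sum.inl.inj ht')).1

lemma Bl_disjoint_copy {T T₀ : Finset (Fin (p r n k))} {hT : T.card = m r n} {j : Fin n}
    {e : Finset (Fin n)} : Disjoint (copyEdge r n k T₀ e) (Bl r n k T hT j) := by
  rw [disjoint_left]
  intro x hx hx'
  obtain ⟨v, -, rfl⟩ := shape_copyEdge r n k hx
  exact inr_notMem_Bl r n k hx'

def mEdge (T : Finset (Fin (p r n k))) (hT : T.card = m r n) (j : Fin n) : Finset (Vt r n k) :=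
  insert (Sum.inr (T, j)) (Bl r n k T hT j)

lemma inr_mem_mEdge {T : Finset (Fin (p r n k))} {hT : T.card = m r n} {j : Fin n}
    {x : Finset (Fin (p r n k)) × Fin n} :
    (Sum.inr x : Vt r n k) ∈ mEdge r n k T hT j ↔ x = (T, j) := by
  simp only [mEdge, mem_insert]
  constructor
  · rintro (h | h)
    · exact Sum.inr.inj h
    · exact absurd h (inr_notMem_Bl r n k)
  · rintro rfl; left; rfl

lemma mEdge_label {T T' : Finset (Fin (p r n k))} {hT : T.card = m r n}
    {hT' : T'.card = m r n} {j j' : Fin n}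
    (h : mEdge r n k T hT j = mEdge r n k T' hT' j') : T = T' ∧ j = j' := by
  have : (Sum.inr (T, j) : Vt r n k) ∈ mEdge r n k T' hT' j' := by
    rw [← h]; exact mem_insert_self _ _
  have := (inr_mem_mEdge r n k).mp this
  exact ⟨congrArg Prod.fst this, congrArg Prod.snd this⟩

lemma card_mEdge (hr : 2 ≤ r) (T : Finset (Fin (p r n k))) (hT : T.card = m r n)
    (j : Fin n) : (mEdge r n k T hT j).card = r := by
  rw [mEdge, card_insert_of_notMem (inr_notMem_Bl r n k), card_Bl]
  omega

def cpEdges (E : Finset (Finset (Fin n))) : Finset (Finset (Vt r n k)) :=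
  (univ : Finset (Finset (Fin (p r n k)))).biUnion (fun T => E.image (copyEdge r n k T))

def mEdges : Finset (Finset (Vt r n k)) :=
  ((univ : Finset (Fin (p r n k))).powersetCard (m r n)).attach.biUnion
    (fun Th => (univ : Finset (Fin n)).image
      (fun j => mEdge r n k Th.1 ((mem_powersetCard.mp Th.2).2) j))

def newE (E : Finset (Finset (Fin n))) : Finset (Finset (Vt r n k)) :=
  cpEdges r n k E ∪ mEdges r n k

lemma mem_cpEdges {E : Finset (Finset (Fin n))} {e' : Finset (Vt r n k)} :
    e' ∈ cpEdges r n k E ↔ ∃ T, ∃ e ∈ E, e' = copyEdge r n k T e := by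
  simp only [cpEdges, mem_biUnion, mem_univ, true_and, mem_image]
  constructor
  · rintro ⟨T, e, he, rfl⟩; exact ⟨T, e, he, rfl⟩
  · rintro ⟨T, e, he, rfl⟩; exact ⟨T, e, he, rfl⟩

lemma mem_mEdges {e' : Finset (Vt r n k)} :
    e' ∈ mEdges r n k ↔ ∃ T, ∃ hT : T.card = m r n, ∃ j, e' = mEdge r n k T hT j := by
  constructor
  · intro h
    obtain ⟨Th, -, hmem⟩ := mem_biUnion.mp h
    obtain ⟨j, -, rfl⟩ := mem_image.mp hmem
    exact ⟨Th.1, (mem_powersetCard.mp Th.2).2, j, rfl⟩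
  · rintro ⟨T, hT, j, rfl⟩
    refine mem_biUnion.mpr ⟨⟨T, mem_powersetCard.mpr ⟨subset_univ _, hT⟩⟩, mem_attach _ _, ?_⟩
    exact mem_image.mpr ⟨j, mem_univ _, rfl⟩

lemma copyEdge_mem_newE {E : Finset (Finset (Fin n))} {T : Finset (Fin (p r n k))}
    {e : Finset (Fin n)} (he : e ∈ E) : copyEdge r n k T e ∈ newE r n k E :=
  mem_union_left _ ((mem_cpEdges r n k).mpr ⟨T, e, he, rfl⟩)

lemma mEdge_mem_newE {E : Finset (Finset (Fin n))} {T : Finset (Fin (p r n k))}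
    {hT : T.card = m r n} {j : Fin n} : mEdge r n k T hT j ∈ newE r n k E :=
  mem_union_right _ ((mem_mEdges r n k).mpr ⟨T, hT, j, rfl⟩)

lemma unif_newE {E : Finset (Finset (Fin n))} (hr : 2 ≤ r) (hU : Unif E r) :
    Unif (newE r n k E) r := by
  intro e' he'
  rcases mem_union.mp he' with h | h
  · obtain ⟨T, e, he, rfl⟩ := (mem_cpEdges r n k).mp h
    rw [card_copyEdge]; exact hU e he
  · obtain ⟨T, hT, j, rfl⟩ := (mem_mEdges r n k).mp h
    exact card_mEdge r n k hr T hT j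


lemma Bl_subset_mEdge {T : Finset (Fin (p r n k))} {hT : T.card = m r n} {j : Fin n} :
    Bl r n k T hT j ⊆ mEdge r n k T hT j := by
  rw [mEdge]; exact subset_insert _ _

lemma inr_mem_mEdge_self {T : Finset (Fin (p r n k))} {hT : T.card = m r n} {j : Fin n} :
    (Sum.inr (T, j) : Vt r n k) ∈ mEdge r n k T hT j :=
  (inr_mem_mEdge r n k).mpr rfl

lemma copyEdge_injective (T : Finset (Fin (p r n k))) :
    Function.Injective (copyEdge r n k T) :=
  fun _ _ h => Finset.image_injective (inr_copy_injective r n k T) h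

lemma mEdge_eq_of_label {T T' : Finset (Fin (p r n k))} {hT : T.card = m r n}
    {hT' : T'.card = m r n} {j j' : Fin n} (h : (T, j) = (T', j')) :
    mEdge r n k T hT j = mEdge r n k T' hT' j' := by
  have h1 : T = T' := congrArg Prod.fst h
  have h2 : j = j' := congrArg Prod.snd h
  subst h1; subst h2; rfl

lemma label_ne_of_mEdge_ne {T T' : Finset (Fin (p r n k))} {hT : T.card = m r n}
    {hT' : T'.card = m r n} {j j' : Fin n}
    (h : mEdge r n k T hT j ≠ mEdge r n k T' hT' j') : (T, j) ≠ (T', j') :=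
  fun hl => h (mEdge_eq_of_label r n k hl)

lemma degen_newE {E : Finset (Finset (Fin n))} {d : ℕ} (hr : 2 ≤ r) (hU : Unif E r)
    (hD : Degen E d) : Degen (newE r n k E) (d + 1) := by
  intro S' hS'
  by_cases hcase : ∃ T v, (Sum.inr (T, v) : Vt r n k) ∈ S'
  · obtain ⟨T, v1, hv1⟩ := hcase
    set ST : Finset (Fin n) := univ.filter (fun v => (Sum.inr (T, v) : Vt r n k) ∈ S')
      with hSTdef
    have hSTne : ST.Nonempty := ⟨v1, mem_filter.mpr ⟨mem_univ _, hv1⟩⟩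
    obtain ⟨v₀, hv₀ST, hv₀d⟩ := hD ST hSTne
    have hv₀S' : (Sum.inr (T, v₀) : Vt r n k) ∈ S' := (mem_filter.mp hv₀ST).2
    refine ⟨Sum.inr (T, v₀), hv₀S', ?_⟩
    rw [newE, filter_union]
    refine le_trans (card_union_le _ _) ?_
    have hb1 : ((cpEdges r n k E).filter
        (fun e' => Sum.inr (T, v₀) ∈ e' ∧ e' ⊆ S')).card ≤ d := by
      have hsub : (cpEdges r n k E).filter (fun e' => Sum.inr (T, v₀) ∈ e' ∧ e' ⊆ S')
          ⊆ (E.filter (fun e => v₀ ∈ e ∧ e ⊆ ST)).image (copyEdge r n k T) := by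
        intro e' he'
        obtain ⟨hmem, hin, hsub'⟩ := mem_filter.mp he'
        obtain ⟨T', e, he, rfl⟩ := (mem_cpEdges r n k).mp hmem
        obtain ⟨hTT, hv₀e⟩ := (mem_copyEdge r n k).mp hin
        subst hTT
        refine mem_image.mpr ⟨e, mem_filter.mpr ⟨he, hv₀e, ?_⟩, rfl⟩
        intro y hy
        exact mem_filter.mpr ⟨mem_univ _, hsub' ((mem_copyEdge r n k).mpr ⟨rfl, hy⟩)⟩
      refine le_trans (card_le_card hsub) ?_
      rw [card_image_of_injective _ (copyEdge_injective r n k T)]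
      exact hv₀d
    have hb2 : ((mEdges r n k).filter
        (fun e' => Sum.inr (T, v₀) ∈ e' ∧ e' ⊆ S')).card ≤ 1 := by
      refine card_le_one.mpr ?_
      intro a ha b hb
      obtain ⟨haM, hain, -⟩ := mem_filter.mp ha
      obtain ⟨hbM, hbin, -⟩ := mem_filter.mp hb
      obtain ⟨Ta, hTa, ja, rfl⟩ := (mem_mEdges r n k).mp haM
      obtain ⟨Tb, hTb, jb, rfl⟩ := (mem_mEdges r n k).mp hbM
      have ha' := (inr_mem_mEdge r n k).mp hain
      have hb' := (inr_mem_mEdge r n k).mp hbin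
      have h1 : Ta = T := (congrArg Prod.fst ha').symm
      have h2 : ja = v₀ := (congrArg Prod.snd ha').symm
      have h3 : Tb = T := (congrArg Prod.fst hb').symm
      have h4 : jb = v₀ := (congrArg Prod.snd hb').symm
      subst h1; subst h2; subst h3; subst h4
      rfl
    omega
  · push_neg at hcase
    obtain ⟨w, hw⟩ := hS'
    refine ⟨w, hw, ?_⟩
    have hempty : (newE r n k E).filter (fun e' => w ∈ e' ∧ e' ⊆ S') = ∅ := by
      rw [filter_eq_empty_iff]
      intro e' he'
      rintro ⟨-, hsub⟩
      rcases mem_union.mp he' with h | h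
      · obtain ⟨T, e, he, rfl⟩ := (mem_cpEdges r n k).mp h
        have hene : e.Nonempty := by
          rw [← card_pos, hU e he]; omega
        obtain ⟨v, hv⟩ := hene
        exact hcase T v (hsub ((mem_copyEdge r n k).mpr ⟨rfl, hv⟩))
      · obtain ⟨T, hT, j, rfl⟩ := (mem_mEdges r n k).mp h
        exact hcase T j (hsub (inr_mem_mEdge_self r n k))
    rw [hempty]
    simp

def dnf (k : ℕ) (hk : 1 ≤ k) (x : Fin (k + 1)) (y : Fin (k + 1)) : Fin k :=
  ⟨if (y : ℕ) < (x : ℕ) then (y : ℕ) else (y : ℕ) - 1, by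
    have h1 := y.2
    have h2 := x.2
    split <;> omega⟩

lemma dnf_inj {k : ℕ} (hk : 1 ≤ k) {x y₁ y₂ : Fin (k + 1)} (h1 : y₁ ≠ x) (h2 : y₂ ≠ x)
    (h : dnf k hk x y₁ = dnf k hk x y₂) : y₁ = y₂ := by
  have h1' : (y₁ : ℕ) ≠ (x : ℕ) := fun hh => h1 (Fin.ext hh)
  have h2' : (y₂ : ℕ) ≠ (x : ℕ) := fun hh => h2 (Fin.ext hh)
  have hval := congrArg Fin.val h
  simp only [dnf] at hval
  have hy1 := y₁.2
  have hy2 := y₂.2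
  apply Fin.ext
  split_ifs at hval <;> omega

lemma ncol_newE {E : Finset (Finset (Fin n))} (hk : 1 ≤ k) (hnc : ¬ Colbl E k) :
    ¬ Colbl (newE r n k E) (k + 1) := by
  rintro ⟨c, hc⟩
  have hmaps : ∀ a ∈ (univ : Finset (Fin (p r n k))),
      c (Sum.inl a) ∈ (univ : Finset (Fin (k+1))) := fun a _ => mem_univ _
  have hcount : (univ : Finset (Fin (k+1))).card * (m r n - 1)
      < (univ : Finset (Fin (p r n k))).card := by
    rw [card_univ, card_univ, Fintype.card_fin, Fintype.card_fin, p]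
    omega
  obtain ⟨x, -, hx⟩ := exists_lt_card_fiber_of_mul_lt_card_of_maps_to hmaps hcount
  have hfib : m r n ≤ ((univ : Finset (Fin (p r n k))).filter
      (fun a => c (Sum.inl a) = x)).card := by omega
  obtain ⟨T, hTsub, hTcard⟩ := exists_subset_card_eq hfib
  have hTx : ∀ b ∈ T, c (Sum.inl b) = x := fun b hb => (mem_filter.mp (hTsub hb)).2
  have hprop : ∀ e ∈ E, ∃ u ∈ e, ∃ w ∈ e, c (Sum.inr (T, u)) ≠ c (Sum.inr (T, w)) := by
    intro e he
    obtain ⟨u', hu', w', hw', hne⟩ := hc (copyEdge r n k T e) (copyEdge_mem_newE r n k he)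
    obtain ⟨u, hu, rfl⟩ := shape_copyEdge r n k hu'
    obtain ⟨w, hw, rfl⟩ := shape_copyEdge r n k hw'
    exact ⟨u, hu, w, hw, hne⟩
  have hused : ∃ v : Fin n, c (Sum.inr (T, v)) = x := by
    by_contra hmiss
    push_neg at hmiss
    apply hnc
    refine ⟨fun v => dnf k hk x (c (Sum.inr (T, v))), fun e he => ?_⟩
    have dninj : ∀ y₁ y₂ : Fin (k+1), y₁ ≠ x → y₂ ≠ x →
        dnf k hk x y₁ = dnf k hk x y₂ → y₁ = y₂ := fun y₁ y₂ h1 h2 h => dnf_inj hk h1 h2 h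
    obtain ⟨u, hu, w, hw, hne⟩ := hprop e he
    exact ⟨u, hu, w, hw, fun hcontra => hne (dninj _ _ (hmiss u) (hmiss w) hcontra)⟩
  obtain ⟨v₀, hv₀⟩ := hused
  obtain ⟨u, hu, w, hw, hne⟩ := hc (mEdge r n k T hTcard v₀) (mEdge_mem_newE r n k)
  have hall : ∀ z ∈ mEdge r n k T hTcard v₀, c z = x := by
    intro z hz
    simp only [mEdge, mem_insert] at hz
    rcases hz with rfl | hz'
    · exact hv₀
    · obtain ⟨t, rfl⟩ := (mem_Bl r n k).mp hz'
      exact hTx _ (blockElt_mem r n k T hTcard v₀ t)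
  exact hne ((hall u hu).trans (hall w hw).symm)

lemma helper_ccm {E : Finset (Finset (Fin n))} (hr : 2 ≤ r) (hU : Unif E r)
    {U : Finset (Vt r n k)} (hUcard : U.card = r + 1)
    {T₁ T₂ Tm : Finset (Fin (p r n k))} {ea eb : Finset (Fin n)}
    {hTm : Tm.card = m r n} {jm : Fin n}
    (ha : ea ∈ E) (hb : eb ∈ E) (hne : copyEdge r n k T₁ ea ≠ copyEdge r n k T₂ eb)
    (h1 : copyEdge r n k T₁ ea ⊆ U) (h2 : copyEdge r n k T₂ eb ⊆ U)
    (h3 : mEdge r n k Tm hTm jm ⊆ U) : False := by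
  have hca : (copyEdge r n k T₁ ea).card = r := by rw [card_copyEdge]; exact hU _ ha
  have hcb : (copyEdge r n k T₂ eb).card = r := by rw [card_copyEdge]; exact hU _ hb
  have hns : ¬ copyEdge r n k T₂ eb ⊆ copyEdge r n k T₁ ea := by
    intro hsub
    exact hne (eq_of_subset_of_card_le hsub (by omega)).symm
  obtain ⟨y, hy2, hy1⟩ := not_subset.mp hns
  have hcup : r + 1 ≤ (copyEdge r n k T₁ ea ∪ copyEdge r n k T₂ eb).card := by
    have hins : insert y (copyEdge r n k T₁ ea)
        ⊆ copyEdge r n k T₁ ea ∪ copyEdge r n k T₂ eb := by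
      intro z hz
      rcases mem_insert.mp hz with rfl | hz
      · exact mem_union_right _ hy2
      · exact mem_union_left _ hz
    calc r + 1 = (insert y (copyEdge r n k T₁ ea)).card := by
          rw [card_insert_of_notMem hy1, hca]
      _ ≤ _ := card_le_card hins
  have hblsub : Bl r n k Tm hTm jm ⊆ U := (Bl_subset_mEdge r n k).trans h3
  have hdisj : Disjoint (copyEdge r n k T₁ ea ∪ copyEdge r n k T₂ eb)
      (Bl r n k Tm hTm jm) :=
    disjoint_union_left.mpr ⟨Bl_disjoint_copy r n k, Bl_disjoint_copy r n k⟩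
  have hsubU : (copyEdge r n k T₁ ea ∪ copyEdge r n k T₂ eb) ∪ Bl r n k Tm hTm jm ⊆ U :=
    union_subset (union_subset h1 h2) hblsub
  have hfin := card_le_card hsubU
  rw [card_union_of_disjoint hdisj, card_Bl] at hfin
  omega

lemma helper_cmm {E : Finset (Finset (Fin n))} (hr : 2 ≤ r) (hU : Unif E r)
    {U : Finset (Vt r n k)} (hUcard : U.card = r + 1)
    {T₀ T₁ T₂ : Finset (Fin (p r n k))} {e₀ : Finset (Fin n)}
    {hT₁ : T₁.card = m r n} {hT₂ : T₂.card = m r n} {j₁ j₂ : Fin n}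
    (h0 : e₀ ∈ E) (hlab : (T₁, j₁) ≠ (T₂, j₂))
    (hs0 : copyEdge r n k T₀ e₀ ⊆ U) (hs1 : mEdge r n k T₁ hT₁ j₁ ⊆ U)
    (hs2 : mEdge r n k T₂ hT₂ j₂ ⊆ U) : False := by
  have hc0 : (copyEdge r n k T₀ e₀).card = r := by rw [card_copyEdge]; exact hU _ h0
  by_cases hTT : T₁ = T₂
  · subst hTT
    have hjj : j₁ ≠ j₂ := fun h => hlab (by rw [h])
    have hsubU : copyEdge r n k T₀ e₀ ∪ (Bl r n k T₁ hT₁ j₁ ∪ Bl r n k T₁ hT₂ j₂) ⊆ U :=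
      union_subset hs0 (union_subset ((Bl_subset_mEdge r n k).trans hs1)
        ((Bl_subset_mEdge r n k).trans hs2))
    have hd1 : Disjoint (Bl r n k T₁ hT₁ j₁) (Bl r n k T₁ hT₂ j₂) := Bl_disjoint r n k hjj
    have hd0 : Disjoint (copyEdge r n k T₀ e₀) (Bl r n k T₁ hT₁ j₁ ∪ Bl r n k T₁ hT₂ j₂) :=
      disjoint_union_right.mpr ⟨Bl_disjoint_copy r n k, Bl_disjoint_copy r n k⟩
    have hfin := card_le_card hsubU
    rw [card_union_of_disjoint hd0, card_union_of_disjoint hd1, card_Bl, card_Bl, hc0] at hfin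
    omega
  · have key : ∀ (T' : Finset (Fin (p r n k))) (hT' : T'.card = m r n) (j' : Fin n),
        mEdge r n k T' hT' j' ⊆ U →
        (Sum.inr (T', j') : Vt r n k) ∉ copyEdge r n k T₀ e₀ → False := by
      intro T' hT' j' hsM hnotin
      have hsubU : insert (Sum.inr (T', j'))
          (copyEdge r n k T₀ e₀ ∪ Bl r n k T' hT' j') ⊆ U := by
        intro z hz
        rcases mem_insert.mp hz with rfl | hz
        · exact hsM (inr_mem_mEdge_self r n k)
        · rcases mem_union.mp hz with hz | hz
          · exact hs0 hz
          · exact hsM ((Bl_subset_mEdge r n k) hz)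
      have hnotin2 : (Sum.inr (T', j') : Vt r n k)
          ∉ copyEdge r n k T₀ e₀ ∪ Bl r n k T' hT' j' := by
        intro h
        rcases mem_union.mp h with h | h
        · exact hnotin h
        · exact inr_notMem_Bl r n k h
      have hfin := card_le_card hsubU
      rw [card_insert_of_notMem hnotin2,
        card_union_of_disjoint (Bl_disjoint_copy r n k), hc0, card_Bl] at hfin
      omega
    by_cases hin : (Sum.inr (T₁, j₁) : Vt r n k) ∈ copyEdge r n k T₀ e₀
    · have hT₁0 : T₁ = T₀ := ((mem_copyEdge r n k).mp hin).1
      have hnotin : (Sum.inr (T₂, j₂) : Vt r n k) ∉ copyEdge r n k T₀ e₀ := by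
        intro h
        exact hTT (hT₁0.trans ((mem_copyEdge r n k).mp h).1.symm)
      exact key T₂ hT₂ j₂ hs2 hnotin
    · exact key T₁ hT₁ j₁ hs1 hin

lemma helper_mmm (hr : 2 ≤ r) {U : Finset (Vt r n k)} (hUcard : U.card = r + 1)
    {T₁ T₂ T₃ : Finset (Fin (p r n k))} {hT₁ : T₁.card = m r n} {hT₂ : T₂.card = m r n}
    {hT₃ : T₃.card = m r n} {j₁ j₂ j₃ : Fin n}
    (h12 : mEdge r n k T₁ hT₁ j₁ ≠ mEdge r n k T₂ hT₂ j₂)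
    (h13 : mEdge r n k T₁ hT₁ j₁ ≠ mEdge r n k T₃ hT₃ j₃)
    (h23 : mEdge r n k T₂ hT₂ j₂ ≠ mEdge r n k T₃ hT₃ j₃)
    (hs1 : mEdge r n k T₁ hT₁ j₁ ⊆ U) (hs2 : mEdge r n k T₂ hT₂ j₂ ⊆ U)
    (hs3 : mEdge r n k T₃ hT₃ j₃ ⊆ U) : False := by
  have l12 := label_ne_of_mEdge_ne r n k h12
  have l13 := label_ne_of_mEdge_ne r n k h13
  have l23 := label_ne_of_mEdge_ne r n k h23
  have i12 : (Sum.inr (T₁, j₁) : Vt r n k) ≠ Sum.inr (T₂, j₂) :=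
    fun h => l12 (Sum.inr.inj h)
  have i13 : (Sum.inr (T₁, j₁) : Vt r n k) ≠ Sum.inr (T₃, j₃) :=
    fun h => l13 (Sum.inr.inj h)
  have i23 : (Sum.inr (T₂, j₂) : Vt r n k) ≠ Sum.inr (T₃, j₃) :=
    fun h => l23 (Sum.inr.inj h)
  have hsubU : insert (Sum.inr (T₁, j₁)) (insert (Sum.inr (T₂, j₂))
      (insert (Sum.inr (T₃, j₃)) (Bl r n k T₁ hT₁ j₁))) ⊆ U := by
    intro z hz
    rcases mem_insert.mp hz with rfl | hz
    · exact hs1 (inr_mem_mEdge_self r n k)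
    rcases mem_insert.mp hz with rfl | hz
    · exact hs2 (inr_mem_mEdge_self r n k)
    rcases mem_insert.mp hz with rfl | hz
    · exact hs3 (inr_mem_mEdge_self r n k)
    exact hs1 ((Bl_subset_mEdge r n k) hz)
  have hn3 : (Sum.inr (T₃, j₃) : Vt r n k) ∉ Bl r n k T₁ hT₁ j₁ := inr_notMem_Bl r n k
  have hn2 : (Sum.inr (T₂, j₂) : Vt r n k)
      ∉ insert (Sum.inr (T₃, j₃)) (Bl r n k T₁ hT₁ j₁) := by
    intro h
    rcases mem_insert.mp h with h | h
    · exact i23 h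
    · exact inr_notMem_Bl r n k h
  have hn1 : (Sum.inr (T₁, j₁) : Vt r n k) ∉ insert (Sum.inr (T₂, j₂))
      (insert (Sum.inr (T₃, j₃)) (Bl r n k T₁ hT₁ j₁)) := by
    intro h
    rcases mem_insert.mp h with h | h
    · exact i12 h
    rcases mem_insert.mp h with h | h
    · exact i13 h
    · exact inr_notMem_Bl r n k h
  have hfin := card_le_card hsubU
  rw [card_insert_of_notMem hn1, card_insert_of_notMem hn2,
    card_insert_of_notMem hn3, card_Bl] at hfin
  omega

lemma helper_ccc {E : Finset (Finset (Fin n))} (hr : 2 ≤ r) (hU : Unif E r)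
    (hTf : TFree E r) {T₁ T₂ T₃ : Finset (Fin (p r n k))} {ea eb ec : Finset (Fin n)}
    (ha : ea ∈ E) (hb : eb ∈ E) (hcm : ec ∈ E)
    (h12 : copyEdge r n k T₁ ea ≠ copyEdge r n k T₂ eb)
    (h13 : copyEdge r n k T₁ ea ≠ copyEdge r n k T₃ ec)
    (h23 : copyEdge r n k T₂ eb ≠ copyEdge r n k T₃ ec)
    (hcard : (copyEdge r n k T₁ ea ∪ copyEdge r n k T₂ eb ∪ copyEdge r n k T₃ ec).card
      = r + 1) : False := by
  have hca : (copyEdge r n k T₁ ea).card = r := by rw [card_copyEdge]; exact hU _ ha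
  have hcb : (copyEdge r n k T₂ eb).card = r := by rw [card_copyEdge]; exact hU _ hb
  have hcc : (copyEdge r n k T₃ ec).card = r := by rw [card_copyEdge]; exact hU _ hcm
  have hT21 : T₂ = T₁ := by
    have hsub : copyEdge r n k T₁ ea ∪ copyEdge r n k T₂ eb
        ⊆ copyEdge r n k T₁ ea ∪ copyEdge r n k T₂ eb ∪ copyEdge r n k T₃ ec :=
      subset_union_left
    have hle := card_le_card hsub
    have hadd := card_union_add_card_inter (copyEdge r n k T₁ ea) (copyEdge r n k T₂ eb)
    have hpos : 0 < (copyEdge r n k T₁ ea ∩ copyEdge r n k T₂ eb).card := by omega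
    obtain ⟨z, hz⟩ := card_pos.mp hpos
    obtain ⟨hz1, hz2⟩ := mem_inter.mp hz
    obtain ⟨v, -, rfl⟩ := shape_copyEdge r n k hz1
    exact (((mem_copyEdge r n k).mp hz2).1).symm
  have hT31 : T₃ = T₁ := by
    have hsub : copyEdge r n k T₁ ea ∪ copyEdge r n k T₃ ec
        ⊆ copyEdge r n k T₁ ea ∪ copyEdge r n k T₂ eb ∪ copyEdge r n k T₃ ec :=
      union_subset (subset_union_left.trans subset_union_left) subset_union_right
    have hle := card_le_card hsub
    have hadd := card_union_add_card_inter (copyEdge r n k T₁ ea) (copyEdge r n k T₃ ec)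
    have hpos : 0 < (copyEdge r n k T₁ ea ∩ copyEdge r n k T₃ ec).card := by omega
    obtain ⟨z, hz⟩ := card_pos.mp hpos
    obtain ⟨hz1, hz2⟩ := mem_inter.mp hz
    obtain ⟨v, -, rfl⟩ := shape_copyEdge r n k hz1
    exact (((mem_copyEdge r n k).mp hz2).1).symm
  rw [hT21] at h12 h23 hcard
  rw [hT31] at h13 h23 hcard
  have himg : copyEdge r n k T₁ ea ∪ copyEdge r n k T₁ eb ∪ copyEdge r n k T₁ ec
      = (ea ∪ eb ∪ ec).image (fun v => (Sum.inr (T₁, v) : Vt r n k)) := by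
    simp [copyEdge, image_union]
  rw [himg, card_image_of_injective _ (inr_copy_injective r n k T₁)] at hcard
  exact hTf ⟨ea, ha, eb, hb, ec, hcm,
    fun h => h12 (by rw [h]), fun h => h13 (by rw [h]), fun h => h23 (by rw [h]), hcard⟩

lemma tfree_newE {E : Finset (Finset (Fin n))} (hr : 2 ≤ r) (hU : Unif E r)
    (hTf : TFree E r) : TFree (newE r n k E) r := by
  rintro ⟨e₁, he₁, e₂, he₂, e₃, he₃, h12, h13, h23, hcard⟩
  have hs1 : e₁ ⊆ e₁ ∪ e₂ ∪ e₃ := subset_union_left.trans subset_union_left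
  have hs2 : e₂ ⊆ e₁ ∪ e₂ ∪ e₃ := subset_union_right.trans subset_union_left
  have hs3 : e₃ ⊆ e₁ ∪ e₂ ∪ e₃ := subset_union_right
  rcases mem_union.mp he₁ with hA | hA <;> rcases mem_union.mp he₂ with hB | hB <;>
    rcases mem_union.mp he₃ with hC | hC
  · obtain ⟨Ta, ea, hea, rfl⟩ := (mem_cpEdges r n k).mp hA
    obtain ⟨Tb, eb, heb, rfl⟩ := (mem_cpEdges r n k).mp hB
    obtain ⟨Tc, ec, hec, rfl⟩ := (mem_cpEdges r n k).mp hC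
    exact helper_ccc r n k hr hU hTf hea heb hec h12 h13 h23 hcard
  · obtain ⟨Ta, ea, hea, rfl⟩ := (mem_cpEdges r n k).mp hA
    obtain ⟨Tb, eb, heb, rfl⟩ := (mem_cpEdges r n k).mp hB
    obtain ⟨Tc, hTc, jc, rfl⟩ := (mem_mEdges r n k).mp hC
    exact helper_ccm r n k hr hU hcard hea heb h12 hs1 hs2 hs3
  · obtain ⟨Ta, ea, hea, rfl⟩ := (mem_cpEdges r n k).mp hA
    obtain ⟨Tb, hTb, jb, rfl⟩ := (mem_mEdges r n k).mp hB
    obtain ⟨Tc, ec, hec, rfl⟩ := (mem_cpEdges r n k).mp hC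
    exact helper_ccm r n k hr hU hcard hea hec h13 hs1 hs3 hs2
  · obtain ⟨Ta, ea, hea, rfl⟩ := (mem_cpEdges r n k).mp hA
    obtain ⟨Tb, hTb, jb, rfl⟩ := (mem_mEdges r n k).mp hB
    obtain ⟨Tc, hTc, jc, rfl⟩ := (mem_mEdges r n k).mp hC
    exact helper_cmm r n k hr hU hcard hea (label_ne_of_mEdge_ne r n k h23) hs1 hs2 hs3
  · obtain ⟨Ta, hTa, ja, rfl⟩ := (mem_mEdges r n k).mp hA
    obtain ⟨Tb, eb, heb, rfl⟩ := (mem_cpEdges r n k).mp hB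
    obtain ⟨Tc, ec, hec, rfl⟩ := (mem_cpEdges r n k).mp hC
    exact helper_ccm r n k hr hU hcard heb hec h23 hs2 hs3 hs1
  · obtain ⟨Ta, hTa, ja, rfl⟩ := (mem_mEdges r n k).mp hA
    obtain ⟨Tb, eb, heb, rfl⟩ := (mem_cpEdges r n k).mp hB
    obtain ⟨Tc, hTc, jc, rfl⟩ := (mem_mEdges r n k).mp hC
    exact helper_cmm r n k hr hU hcard heb (label_ne_of_mEdge_ne r n k h13) hs2 hs1 hs3
  · obtain ⟨Ta, hTa, ja, rfl⟩ := (mem_mEdges r n k).mp hA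
    obtain ⟨Tb, hTb, jb, rfl⟩ := (mem_mEdges r n k).mp hB
    obtain ⟨Tc, ec, hec, rfl⟩ := (mem_cpEdges r n k).mp hC
    exact helper_cmm r n k hr hU hcard hec (label_ne_of_mEdge_ne r n k h12) hs3 hs1 hs2
  · obtain ⟨Ta, hTa, ja, rfl⟩ := (mem_mEdges r n k).mp hA
    obtain ⟨Tb, hTb, jb, rfl⟩ := (mem_mEdges r n k).mp hB
    obtain ⟨Tc, hTc, jc, rfl⟩ := (mem_mEdges r n k).mp hC
    exact helper_mmm r n k hr hcard h12 h13 h23 hs1 hs2 hs3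


end Step

structure Good (r d : ℕ) where
  n : ℕ
  E : Finset (Finset (Fin n))
  uniform : Unif E r
  tfree : TFree E r
  degen : Degen E d
  ncol : ¬ Colbl E d

noncomputable def baseGood (r : ℕ) (hr : 2 ≤ r) : Good r 1 where
  n := r
  E := {Finset.univ}
  uniform := by
    intro e he
    rw [mem_singleton] at he
    subst he
    simp
  tfree := by
    rintro ⟨e₁, h1, e₂, h2, e₃, h3, h12, -, -, -⟩
    rw [mem_singleton] at h1 h2
    exact h12 (h1.trans h2.symm)
  degen := by
    intro S hS
    obtain ⟨v, hv⟩ := hS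
    refine ⟨v, hv, le_trans (card_filter_le _ _) ?_⟩
    simp
  ncol := by
    rintro ⟨c, hc⟩
    obtain ⟨u, -, w, -, hne⟩ := hc Finset.univ (mem_singleton_self _)
    exact hne (Subsingleton.elim _ _)

set_option maxHeartbeats 800000 in
noncomputable def stepGood (r k : ℕ) (hr : 2 ≤ r) (hk : 1 ≤ k) (G : Good r k) :
    Good r (k + 1) := by
  refine ⟨Fintype.card (Step.Vt r G.n k),
    (Step.newE r G.n k G.E).image (fun e => e.image (Fintype.equivFin (Step.Vt r G.n k))),
    ?_, ?_, ?_, ?_⟩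
  · exact unif_image (Fintype.equivFin (Step.Vt r G.n k)).injective
      (Step.unif_newE r G.n k hr G.uniform)
  · exact tfree_image (Fintype.equivFin (Step.Vt r G.n k)).injective
      (Step.tfree_newE r G.n k hr G.uniform G.tfree)
  · exact degen_image (Fintype.equivFin (Step.Vt r G.n k)).injective
      (Step.degen_newE r G.n k hr G.uniform G.degen)
  · exact fun h => Step.ncol_newE r G.n k hk G.ncol (colbl_back h)

theorem main (r d : ℕ) (hr : 2 ≤ r) (hd : 1 ≤ d) :
    ∃ (n : ℕ) (E : Finset (Finset (Fin n))),
      Uniform E r ∧ TriangleFree E r ∧ Degenerate E d ∧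
      Colorable E (d + 1) ∧ ∀ k : ℕ, Colorable E k → d + 1 ≤ k := by
  have hgood : Nonempty (Good r d) := by
    induction d, hd using Nat.le_induction with
    | base => exact ⟨baseGood r hr⟩
    | succ d hd ih =>
      obtain ⟨G⟩ := ih
      exact ⟨stepGood r d hr hd G⟩
  obtain ⟨G⟩ := hgood
  refine ⟨G.n, G.E, G.uniform, G.tfree, G.degen, ?_, ?_⟩
  · exact colbl_of_degen hr G.uniform G.degen
  · intro k hk
    by_contra hlt
    push_neg at hlt
    exact G.ncol (colbl_mono (by omega) hk)

end TFD

/-- For all `r ≥ 2` and `d ≥ 1` there is a finite triangle-free `d`-degenerate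
`r`-uniform hypergraph with chromatic number exactly `d + 1`. -/
theorem exists_triangleFree_degenerate_chromatic (r d : ℕ) (hr : 2 ≤ r) (hd : 1 ≤ d) :
    ∃ (n : ℕ) (E : Finset (Finset (Fin n))),
      Uniform E r ∧ TriangleFree E r ∧ Degenerate E d ∧
      Colorable E (d + 1) ∧ ∀ k : ℕ, Colorable E k → d + 1 ≤ k := by
  exact TFD.main r d hr hd
end

section
/- For every integer r ≥ 2 there exists a constant c > 0 such that every r-uniform hypergraph with maximum degree at most Δ, where Δ ≥ 1, has chromatic number at most c · Δ^{1/(r−1)}. -/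
/-!
Counting version of the symmetric Lovász Local Lemma. Colour with `k ≈ (4rΔ)^(1/(r-1))` colours
and let `N(S)` be the number of colourings in which no edge of `S` is monochromatic; every edge
meets at most `d = rΔ` edges. By induction on `S`, adding an edge `e` keeps at least a fraction
`1 - 1/(2d)` of the colourings: the edges of `S` disjoint from `e` do not constrain the colours on
`e`, so at most a fraction `k^(1-r) ≤ 1/(4d)` of their proper colourings make `e` monochromatic,
while (by the induction hypothesis) the at most `d` edges of `S` meeting `e` lose at most a factor
`(1 - 1/(2d))^d ≥ 1/2`. Hence `N(E) ≥ (1 - 1/(2d))^|E| k^n > 0`.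
-/

open Finset Fintype

theorem pow_card_mul_le_of_le_insert {β : Type*} [DecidableEq β] {N : Finset β → ℝ} {p : ℝ}
    (hp : 0 ≤ p) {A B : Finset β} (hAB : Disjoint A B)
    (h : ∀ T ⊂ A ∪ B, ∀ b ∈ B, p * N T ≤ N (insert b T)) : p ^ #B * N A ≤ N (A ∪ B) := by
  induction B using Finset.induction_on with
  | empty => simp
  | insert b B hb ih =>
    obtain ⟨hbA, hAB⟩ := disjoint_insert_right.1 hAB
    have hlt : A ∪ B ⊂ A ∪ insert b B := by
      rw [union_insert]
      exact ssubset_insert (by simp [hbA, hb])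
    calc p ^ #(insert b B) * N A = p * (p ^ #B * N A) := by
          rw [card_insert_of_notMem hb, pow_succ]; ring
      _ ≤ p * N (A ∪ B) := mul_le_mul_of_nonneg_left
          (ih hAB fun T hT c hc => h T (hT.trans hlt) c (mem_insert_of_mem hc)) hp
      _ ≤ N (insert b (A ∪ B)) := h _ hlt b (mem_insert_self b B)
      _ = N (A ∪ insert b B) := by rw [union_insert]

theorem one_sub_inv_two_mul_pos (d : ℕ) : 0 < 1 - (2 * d : ℝ)⁻¹ := by
  rcases Nat.eq_zero_or_pos d with rfl | hd
  · simp
  · have : (1 : ℝ) ≤ d := by exact_mod_cast hd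
    have : (2 * d : ℝ)⁻¹ < 1 := inv_lt_one_of_one_lt₀ (by linarith)
    linarith

theorem half_le_one_sub_inv_two_mul_pow {m d : ℕ} (hm : m ≤ d) :
    (1 / 2 : ℝ) ≤ (1 - (2 * d : ℝ)⁻¹) ^ m := by
  rcases Nat.eq_zero_or_pos d with rfl | hd
  · norm_num [Nat.le_zero.1 hm]
  have hd1 : (1 : ℝ) ≤ d := by exact_mod_cast hd
  have hq : (2 * d : ℝ)⁻¹ ≤ 1 := inv_le_one_of_one_le₀ (by linarith)
  calc (1 / 2 : ℝ) = 1 + d * -(2 * d : ℝ)⁻¹ := by field_simp; ring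
    _ ≤ (1 - (2 * d : ℝ)⁻¹) ^ d := by
        rw [sub_eq_add_neg]; exact one_add_mul_le_pow (by linarith) d
    _ ≤ (1 - (2 * d : ℝ)⁻¹) ^ m := pow_le_pow_of_le_one (sub_nonneg.2 hq) (by simp) hm

section Coloring

variable {V α : Type*}

def IsMonochromatic (col : V → α) (e : Finset V) : Prop :=
  ∀ u ∈ e, ∀ w ∈ e, col u = col w

instance [DecidableEq α] (col : V → α) (e : Finset V) : Decidable (IsMonochromatic col e) := by
  unfold IsMonochromatic; infer_instance

variable [Fintype V] [DecidableEq V] [Fintype α] [DecidableEq α]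

variable (α) in
def properColorings (S : Finset (Finset V)) : Finset (V → α) :=
  {col | ∀ f ∈ S, ¬IsMonochromatic col f}

theorem mem_properColorings {S : Finset (Finset V)} {col : V → α} :
    col ∈ properColorings α S ↔ ∀ f ∈ S, ¬IsMonochromatic col f := by
  simp [properColorings]

theorem properColorings_antitone : Antitone (properColorings (V := V) α) :=
  fun _ _ hST _ hcol => mem_properColorings.2 fun f hf => mem_properColorings.1 hcol f (hST hf)

theorem properColorings_insert (e : Finset V) (S : Finset (Finset V)) :
    properColorings α (insert e S) = {col ∈ properColorings α S | ¬IsMonochromatic col e} := by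
  ext col
  simp [mem_properColorings, and_comm]

theorem card_filter_isMonochromatic_mul_le {e : Finset V} (he : e.Nonempty)
    {S : Finset (Finset V)} (hS : ∀ f ∈ S, Disjoint f e) :
    #{col ∈ properColorings α S | IsMonochromatic col e} * card α ^ (#e - 1)
      ≤ #(properColorings α S) := by
  obtain ⟨v₀, hv₀⟩ := he
  set e' := e.erase v₀
  let recolor : (V → α) × (e' → α) → V → α :=
    fun p v => if h : v ∈ e' then p.2 ⟨v, h⟩ else p.1 v
  have hcard : card (e' → α) = card α ^ (#e - 1) := by
    rw [card_fun, card_coe, card_erase_of_mem hv₀]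
  rw [← hcard, ← card_univ, ← card_product]
  refine card_le_card_of_injOn recolor ?_ ?_
  · rintro ⟨col, g⟩ hp
    simp only [coe_product, Set.mem_prod, mem_coe, mem_filter, mem_properColorings] at hp ⊢
    intro f hf hmono
    have hagree : ∀ v ∈ f, recolor (col, g) v = col v := fun v hv => dif_neg fun hve =>
      disjoint_left.1 (hS f hf) hv (mem_of_mem_erase hve)
    exact hp.1.1 f hf fun u hu w hw => by simpa [hagree u hu, hagree w hw] using hmono u hu w hw
  · rintro ⟨col, g⟩ hp ⟨col', g'⟩ hp' heq
    simp only [coe_product, Set.mem_prod, mem_coe, mem_filter, mem_univ] at hp hp'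
    have hoff : ∀ v ∉ e', col v = col' v := fun v hv => by
      simpa [recolor, hv] using congrFun heq v
    have hg : g = g' := funext fun ⟨v, hv⟩ => by simpa [recolor, hv] using congrFun heq v
    have hcol : col = col' := funext fun v => by
      by_cases hv : v ∈ e'
      · calc col v = col v₀ := hp.1.2 v (mem_of_mem_erase hv) v₀ hv₀
          _ = col' v₀ := hoff v₀ (notMem_erase v₀ e)
          _ = col' v := hp'.1.2 v₀ hv₀ v (mem_of_mem_erase hv)
      · exact hoff v hv
    rw [hcol, hg]

theorem one_sub_mul_card_properColorings_le_insert {E : Finset (Finset V)} {d : ℕ}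
    (hne : ∀ e ∈ E, e.Nonempty) (hdeg : ∀ e ∈ E, #{f ∈ E | ¬Disjoint f e} ≤ d)
    (hcol : ∀ e ∈ E, 4 * d ≤ card α ^ (#e - 1)) {S : Finset (Finset V)} (hS : S ⊆ E)
    {e : Finset V} (he : e ∈ E) :
    (1 - (2 * d : ℝ)⁻¹) * #(properColorings α S) ≤ #(properColorings α (insert e S)) := by
  induction S using Finset.strongInduction generalizing e with
  | H S ih =>
  set N : Finset (Finset V) → ℝ := fun T => (#(properColorings α T) : ℕ)
  set M : ℝ := ((#{col ∈ properColorings α S | IsMonochromatic col e} : ℕ) : ℝ)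
  set S₁ := {f ∈ S | ¬Disjoint f e}
  set S₂ := {f ∈ S | Disjoint f e}
  have hunion : S₂ ∪ S₁ = S := filter_union_filter_not_eq _ _
  have hd : (1 : ℝ) ≤ d := by
    have : e ∈ {f ∈ E | ¬Disjoint f e} := by simpa [he] using (hne e he).ne_empty
    exact Nat.one_le_cast.2 ((card_pos.2 ⟨e, this⟩).trans_le (hdeg e he))
  have hhalf : 1 / 2 * N S₂ ≤ N S := by
    have hS₁ : #S₁ ≤ d := (card_le_card (filter_subset_filter _ hS)).trans (hdeg e he)
    calc 1 / 2 * N S₂ ≤ (1 - (2 * d : ℝ)⁻¹) ^ #S₁ * N S₂ :=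
          mul_le_mul_of_nonneg_right (half_le_one_sub_inv_two_mul_pow hS₁) (by positivity)
      _ ≤ N (S₂ ∪ S₁) := pow_card_mul_le_of_le_insert (one_sub_inv_two_mul_pos d).le
          (disjoint_filter_filter_not _ _ _) fun T hT b hb =>
            ih T (hunion ▸ hT) ((hunion ▸ hT).subset.trans hS) (hS (mem_of_mem_filter b hb))
      _ = N S := by rw [hunion]
  have hM : M * (card α : ℝ) ^ (#e - 1) ≤ N S₂ := by
    have := (Nat.mul_le_mul_right _ (card_le_card (filter_subset_filter _
      (properColorings_antitone (filter_subset _ S))))).trans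
      (card_filter_isMonochromatic_mul_le (α := α) (hne e he) (S := S₂)
        fun f hf => (mem_filter.1 hf).2)
    simp only [M, N]
    exact_mod_cast this
  have hsplit : N (insert e S) = N S - M := by
    simp only [N, M, properColorings_insert]
    rw [eq_sub_iff_add_eq, ← Nat.cast_add, add_comm, card_filter_add_card_filter_not]
  have hK : (4 * d : ℝ) ≤ (card α : ℝ) ^ (#e - 1) := by exact_mod_cast hcol e he
  have hMN : M ≤ (2 * d : ℝ)⁻¹ * N S := by
    rw [inv_mul_eq_div, le_div_iff₀ (by positivity)]
    nlinarith [mul_le_mul_of_nonneg_left hK (by positivity : 0 ≤ M)]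
  change (1 - (2 * d : ℝ)⁻¹) * N S ≤ N (insert e S)
  linarith

theorem properColorings_nonempty [Nonempty α] {E : Finset (Finset V)} {d : ℕ}
    (hne : ∀ e ∈ E, e.Nonempty) (hdeg : ∀ e ∈ E, #{f ∈ E | ¬Disjoint f e} ≤ d)
    (hcol : ∀ e ∈ E, 4 * d ≤ card α ^ (#e - 1)) : (properColorings α E).Nonempty := by
  have hp := one_sub_inv_two_mul_pos d
  have h := pow_card_mul_le_of_le_insert (N := fun T => (#(properColorings α T) : ℝ)) hp.le
    (disjoint_empty_left E) fun T hT b hb =>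
      one_sub_mul_card_properColorings_le_insert hne hdeg hcol (by simpa using hT.subset) hb
  have hall : #(properColorings α (∅ : Finset (Finset V))) = card α ^ card V := by
    simp [properColorings]
  rw [empty_union, hall] at h
  rw [← card_pos, ← Nat.cast_pos (α := ℝ)]
  exact lt_of_lt_of_le (by positivity) h

end Coloring

theorem card_filter_not_disjoint_le {V : Type*} [DecidableEq V] {E : Finset (Finset V)} {Δ : ℕ}
    (hdeg : ∀ v, #{f ∈ E | v ∈ f} ≤ Δ) (e : Finset V) : #{f ∈ E | ¬Disjoint f e} ≤ #e * Δ :=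
  calc #{f ∈ E | ¬Disjoint f e} ≤ #(e.biUnion fun v => {f ∈ E | v ∈ f}) := by
        refine card_le_card fun f hf => ?_
        obtain ⟨hfE, hfe⟩ := mem_filter.1 hf
        obtain ⟨v, hvf, hve⟩ := not_disjoint_iff.1 hfe
        exact mem_biUnion.2 ⟨v, hve, mem_filter.2 ⟨hfE, hvf⟩⟩
    _ ≤ ∑ v ∈ e, #{f ∈ E | v ∈ f} := card_biUnion_le
    _ ≤ #e * Δ := sum_le_card_nsmul _ _ _ fun v _ => hdeg v

theorem exists_le_pow_and_le_rpow_inv_add_one (a : ℕ) {m : ℕ} (hm : m ≠ 0) :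
    ∃ k : ℕ, a ≤ k ^ m ∧ (k : ℝ) ≤ (a : ℝ) ^ (m⁻¹ : ℝ) + 1 := by
  have hroot : 0 ≤ (a : ℝ) ^ (m⁻¹ : ℝ) := by positivity
  refine ⟨⌈(a : ℝ) ^ (m⁻¹ : ℝ)⌉₊, ?_, (Nat.ceil_lt_add_one hroot).le⟩
  have : (a : ℝ) ≤ (⌈(a : ℝ) ^ (m⁻¹ : ℝ)⌉₊ : ℝ) ^ m := by
    calc (a : ℝ) = ((a : ℝ) ^ (m⁻¹ : ℝ)) ^ m := (Real.rpow_inv_natCast_pow a.cast_nonneg hm).symm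
      _ ≤ _ := pow_le_pow_left₀ hroot (Nat.le_ceil _) m
  exact_mod_cast this

/-- For every `r ≥ 2` there is a constant `c > 0` such that every `r`-uniform
hypergraph with maximum degree at most `Δ ≥ 1` has chromatic number at most
`c · Δ^(1/(r-1))`: it has a proper colouring with some number `k` of colours
satisfying `k ≤ c · Δ^(1/(r-1))`. -/
theorem erdos_lovasz_chromatic (r : ℕ) (hr : 2 ≤ r) :
    ∃ c : ℝ, 0 < c ∧
      ∀ (n : ℕ) (E : Finset (Finset (Fin n))) (Δ : ℕ), 1 ≤ Δ →
        (∀ e ∈ E, e.card = r) →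
        (∀ v : Fin n, (E.filter (fun e => v ∈ e)).card ≤ Δ) →
        ∃ k : ℕ,
          (∃ col : Fin n → Fin k, ∀ e ∈ E, ∃ u ∈ e, ∃ w ∈ e, col u ≠ col w) ∧
          (k : ℝ) ≤ c * (Δ : ℝ) ^ ((1 : ℝ) / ((r : ℝ) - 1)) := by
  rw [show (1 : ℝ) / ((r : ℝ) - 1) = ((r - 1 : ℕ) : ℝ)⁻¹ by
    rw [Nat.cast_sub (by omega), Nat.cast_one, one_div]]
  set t : ℝ := ((r - 1 : ℕ) : ℝ)⁻¹
  refine ⟨(4 * r : ℝ) ^ t + 1, by positivity, fun n E Δ hΔ hEr hdeg => ?_⟩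
  obtain ⟨k, hk, hkt⟩ := exists_le_pow_and_le_rpow_inv_add_one (4 * (r * Δ)) (m := r - 1) (by omega)
  have : Nonempty (Fin k) := Fin.pos_iff_nonempty.1 <| Nat.pos_of_ne_zero fun hk0 => by
    rw [hk0, zero_pow (by omega)] at hk
    have : 0 < r * Δ := Nat.mul_pos (by omega) hΔ
    omega
  obtain ⟨col, hcol⟩ := properColorings_nonempty (α := Fin k) (E := E) (d := r * Δ)
    (fun e he => card_pos.1 (by rw [hEr e he]; omega))
    (fun e he => hEr e he ▸ card_filter_not_disjoint_le hdeg e)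
    (fun e he => by rwa [hEr e he, Fintype.card_fin])
  refine ⟨k, ⟨col, fun e he => ?_⟩, ?_⟩
  · simpa [IsMonochromatic] using mem_properColorings.1 hcol e he
  · have hΔt : (1 : ℝ) ≤ (Δ : ℝ) ^ t := Real.one_le_rpow (by exact_mod_cast hΔ) (by positivity)
    calc (k : ℝ) ≤ (4 * r : ℝ) ^ t * (Δ : ℝ) ^ t + 1 := by
          rw [← Real.mul_rpow (by positivity) (by positivity)]
          convert hkt using 3
          push_cast; ring
      _ ≤ ((4 * r : ℝ) ^ t + 1) * (Δ : ℝ) ^ t := by nlinarith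
end

section
/- For every integer r ≥ 2 there exists a constant c > 0 such that every r-uniform hypergraph with n ≥ 1 vertices and m edges whose average degree d = r·m/n satisfies d ≥ 1 contains an independent set of size at least c · n / d^{1/(r−1)}. -/
/-! Deletion method. Put `q = d ^ (1 / (r - 1))` and take a set `T` of `s ≈ n / (2q)` vertices
containing as few edges as possible: averaging over all `s`-subsets, `T` contains at most
`m (s / n) ^ r ≤ n / (8q)` edges. Deleting one vertex of each of them leaves an independent set
of size at least `s - n / (8q) ≥ n / (8q)`. -/

open Finset

theorem Nat.descFactorial_mul_pow_le {s n : ℕ} (hsn : s ≤ n) (r : ℕ) :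
    s.descFactorial r * n ^ r ≤ n.descFactorial r * s ^ r := by
  induction r with
  | zero => simp
  | succ r ih =>
    have hstep : (s - r) * n ≤ (n - r) * s := by
      rw [Nat.sub_mul, Nat.sub_mul, mul_comm s n]
      exact Nat.sub_le_sub_left (Nat.mul_le_mul_left r hsn) _
    calc s.descFactorial (r + 1) * n ^ (r + 1)
        = ((s - r) * n) * (s.descFactorial r * n ^ r) := by rw [Nat.descFactorial_succ]; ring
      _ ≤ ((n - r) * s) * (n.descFactorial r * s ^ r) := Nat.mul_le_mul hstep ih
      _ = n.descFactorial (r + 1) * s ^ (r + 1) := by rw [Nat.descFactorial_succ]; ring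

theorem Nat.choose_mul_pow_le {s n : ℕ} (hsn : s ≤ n) (r : ℕ) :
    s.choose r * n ^ r ≤ n.choose r * s ^ r := by
  have h := Nat.descFactorial_mul_pow_le hsn r
  rw [Nat.descFactorial_eq_factorial_mul_choose, Nat.descFactorial_eq_factorial_mul_choose,
    mul_assoc, mul_assoc] at h
  exact Nat.le_of_mul_le_mul_left h r.factorial_pos

theorem mul_pow_le_of_mul_le_mul_pow_sub_one {r : ℕ} (hr : 2 ≤ r) {m n q x : ℝ} (hm : 0 ≤ m)
    (hq : 0 < q) (hx : 0 ≤ x) (hxn : x ≤ n / (2 * q)) (hmn : r * m ≤ n * q ^ (r - 1)) :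
    m * x ^ r ≤ n ^ r * (n / (8 * q)) := by
  have hn : 0 ≤ n := by
    have := hx.trans hxn
    rwa [le_div_iff₀ (by positivity), zero_mul] at this
  have h8 : (8 : ℝ) ≤ r * 2 ^ r := by
    have h4 : (4 : ℝ) ≤ 2 ^ r := by
      calc (4 : ℝ) = 2 ^ 2 := by norm_num
        _ ≤ 2 ^ r := pow_le_pow_right₀ one_le_two hr
    have : (2 : ℝ) ≤ r := by exact_mod_cast hr
    nlinarith
  have hqr : q ^ r = q * q ^ (r - 1) := (mul_pow_sub_one (by omega) q).symm
  calc m * x ^ r ≤ m * (n / (2 * q)) ^ r := by gcongr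
    _ = (r * m) * n ^ r / (r * 2 ^ r * q * q ^ (r - 1)) := by
      rw [div_pow, mul_pow, hqr]
      field_simp
    _ ≤ (n * q ^ (r - 1)) * n ^ r / (8 * q * q ^ (r - 1)) := by gcongr
    _ = n ^ r * (n / (8 * q)) := by
      field_simp

def IsIndependent {α : Type*} (E : Finset (Finset α)) (I : Finset α) : Prop :=
  ∀ e ∈ E, ¬ e ⊆ I

namespace Finset

variable {α : Type*} [DecidableEq α]

theorem card_filter_powersetCard_subset_mul_choose {e t : Finset α} (het : e ⊆ t) (s : ℕ) :
    #{T ∈ t.powersetCard s | e ⊆ T} * (#t).choose #e = (#t).choose s * s.choose #e := by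
  by_cases hes : #e ≤ s
  · rw [card_filter_powersetCard_subset e t s het hes, Nat.choose_mul hes, mul_comm]
  · have hnone : ∀ T ∈ t.powersetCard s, ¬ e ⊆ T := fun T hT heT =>
      hes ((card_le_card heT).trans (mem_powersetCard.1 hT).2.le)
    rw [filter_false_of_mem hnone, Nat.choose_eq_zero_of_lt (not_le.1 hes)]
    simp

theorem exists_card_filter_subset_mul_choose_le {t : Finset α} {E : Finset (Finset α)} {r s : ℕ}
    (hEt : ∀ e ∈ E, e ⊆ t) (hE : ∀ e ∈ E, #e = r) (hs : s ≤ #t) :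
    ∃ T ∈ t.powersetCard s, #{e ∈ E | e ⊆ T} * (#t).choose r ≤ #E * s.choose r := by
  refine exists_le_of_sum_le (powersetCard_nonempty.2 hs) (le_of_eq ?_)
  calc ∑ T ∈ t.powersetCard s, #{e ∈ E | e ⊆ T} * (#t).choose r
      = ∑ e ∈ E, #{T ∈ t.powersetCard s | e ⊆ T} * (#t).choose r := by
        rw [← sum_mul, ← sum_mul]
        congr 1
        exact sum_card_bipartiteAbove_eq_sum_card_bipartiteBelow (fun (T e : Finset α) => e ⊆ T)
    _ = ∑ _e ∈ E, (#t).choose s * s.choose r := sum_congr rfl fun e he => by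
        rw [← hE e he, card_filter_powersetCard_subset_mul_choose (hEt e he)]
    _ = ∑ _T ∈ t.powersetCard s, #E * s.choose r := by
        rw [sum_const, sum_const, card_powersetCard, smul_eq_mul, smul_eq_mul]
        ring

theorem exists_card_filter_subset_mul_pow_le {t : Finset α} {E : Finset (Finset α)} {r s : ℕ}
    (hEt : ∀ e ∈ E, e ⊆ t) (hE : ∀ e ∈ E, #e = r) (hs : s ≤ #t) :
    ∃ T ∈ t.powersetCard s, #{e ∈ E | e ⊆ T} * #t ^ r ≤ #E * s ^ r := by
  obtain ⟨T, hT, hTE⟩ := exists_card_filter_subset_mul_choose_le hEt hE hs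
  refine ⟨T, hT, ?_⟩
  rcases E.eq_empty_or_nonempty with rfl | ⟨e, he⟩
  · simp
  have hpos : 0 < (#t).choose r := Nat.choose_pos (hE e he ▸ card_le_card (hEt e he))
  refine Nat.le_of_mul_le_mul_right ?_ hpos
  calc #{e ∈ E | e ⊆ T} * #t ^ r * (#t).choose r
      = #{e ∈ E | e ⊆ T} * (#t).choose r * #t ^ r := by ring
    _ ≤ #E * s.choose r * #t ^ r := Nat.mul_le_mul_right _ hTE
    _ = #E * (s.choose r * #t ^ r) := by ring
    _ ≤ #E * ((#t).choose r * s ^ r) := Nat.mul_le_mul_left _ (Nat.choose_mul_pow_le hs r)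
    _ = #E * s ^ r * (#t).choose r := by ring

theorem exists_isIndependent_subset_card_le {E : Finset (Finset α)}
    (hE : ∀ e ∈ E, e.Nonempty) (T : Finset α) :
    ∃ I ⊆ T, IsIndependent E I ∧ #T ≤ #I + #{e ∈ E | e ⊆ T} := by
  choose f hf using hE
  set B := {e ∈ E | e ⊆ T}.attach.image fun e => f e.1 (mem_filter.1 e.2).1
  refine ⟨T \ B, sdiff_subset, fun e he heI => ?_, ?_⟩
  · have hB : f e he ∈ B :=
      mem_image.2 ⟨⟨e, mem_filter.2 ⟨he, heI.trans sdiff_subset⟩⟩, mem_attach _ _, rfl⟩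
    exact (mem_sdiff.1 (heI (hf e he))).2 hB
  · calc #T ≤ #(T \ B) + #B := card_le_card_sdiff_add_card
      _ ≤ #(T \ B) + #{e ∈ E | e ⊆ T} :=
        Nat.add_le_add_left (card_image_le.trans card_attach.le) _

theorem exists_isIndependent_mul_pow_le_card_mul_pow_add {t : Finset α} {E : Finset (Finset α)}
    {r s : ℕ} (hr : 0 < r) (hEt : ∀ e ∈ E, e ⊆ t) (hE : ∀ e ∈ E, #e = r) (hs : s ≤ #t) :
    ∃ I ⊆ t, IsIndependent E I ∧ s * #t ^ r ≤ #I * #t ^ r + #E * s ^ r := by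
  obtain ⟨T, hT, hTE⟩ := exists_card_filter_subset_mul_pow_le hEt hE hs
  obtain ⟨hTt, rfl⟩ := mem_powersetCard.1 hT
  obtain ⟨I, hIT, hI, hcard⟩ :=
    exists_isIndependent_subset_card_le (fun e he => card_pos.1 (hE e he ▸ hr)) T
  refine ⟨I, hIT.trans hTt, hI, ?_⟩
  calc #T * #t ^ r ≤ (#I + #{e ∈ E | e ⊆ T}) * #t ^ r := Nat.mul_le_mul_right _ hcard
    _ ≤ #I * #t ^ r + #E * #T ^ r := by rw [add_mul]; exact Nat.add_le_add_left hTE _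

theorem exists_isIndependent_div_le_card {t : Finset α} (ht : t.Nonempty)
    {E : Finset (Finset α)} {r : ℕ} (hr : 2 ≤ r) (hEt : ∀ e ∈ E, e ⊆ t) (hE : ∀ e ∈ E, #e = r)
    {q : ℝ} (hq : 1 ≤ q) (hdeg : r * #E ≤ #t * q ^ (r - 1)) :
    ∃ I ⊆ t, IsIndependent E I ∧ #t / (8 * q) ≤ #I := by
  have hq0 : 0 < q := one_pos.trans_le hq
  by_cases hsmall : (#t : ℝ) / (8 * q) ≤ 1
  · obtain ⟨a, ha⟩ := ht
    refine ⟨{a}, singleton_subset_iff.2 ha, fun e he hea => ?_, by simpa using hsmall⟩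
    have := card_le_card hea
    rw [hE e he, card_singleton] at this
    omega
  rw [not_le] at hsmall
  set s := ⌊(#t : ℝ) / (2 * q)⌋₊
  have hs_le : (s : ℝ) ≤ #t / (2 * q) := Nat.floor_le (by positivity)
  have hs_gt : (#t : ℝ) / (2 * q) < s + 1 := Nat.lt_floor_add_one _
  have hst : s ≤ #t := by
    have : (#t : ℝ) / (2 * q) ≤ #t := div_le_self (by positivity) (by linarith)
    exact_mod_cast hs_le.trans this
  obtain ⟨I, hIt, hI, hcard⟩ :=
    exists_isIndependent_mul_pow_le_card_mul_pow_add (by omega) hEt hE hst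
  refine ⟨I, hIt, hI, ?_⟩
  have hcardR : (s : ℝ) * #t ^ r ≤ #I * #t ^ r + #E * s ^ r := by exact_mod_cast hcard
  have hEs : (#E : ℝ) * s ^ r ≤ #t ^ r * (#t / (8 * q)) :=
    mul_pow_le_of_mul_le_mul_pow_sub_one hr (by positivity) hq0 (by positivity) hs_le hdeg
  have hsI : (s : ℝ) ≤ #I + #t / (8 * q) := by
    refine le_of_mul_le_mul_right ?_ (by positivity : (0 : ℝ) < #t ^ r)
    linarith
  have h4 : (#t : ℝ) / (2 * q) = 4 * (#t / (8 * q)) := by field_simp; ring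
  linarith

end Finset

/-- Spencer's theorem: for every `r ≥ 2` there is a constant `c > 0` such that
every `r`-uniform hypergraph with `n ≥ 1` vertices and `m` edges whose average
degree `d = r·m/n` satisfies `d ≥ 1` contains an independent set (a set of
vertices containing no edge) of size at least `c · n / d^(1/(r-1))`. -/
theorem spencer_independent_set (r : ℕ) (hr : 2 ≤ r) :
    ∃ c : ℝ, 0 < c ∧
      ∀ (n : ℕ), 1 ≤ n → ∀ E : Finset (Finset (Fin n)),
        (∀ e ∈ E, e.card = r) →
        (1 : ℝ) ≤ (r : ℝ) * (E.card : ℝ) / (n : ℝ) →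
        ∃ I : Finset (Fin n), (∀ e ∈ E, ¬ e ⊆ I) ∧
          c * (n : ℝ) / ((r : ℝ) * (E.card : ℝ) / (n : ℝ)) ^ ((1 : ℝ) / ((r : ℝ) - 1))
            ≤ (I.card : ℝ) := by
  refine ⟨1 / 8, by norm_num, fun n hn E hE hd => ?_⟩
  set d : ℝ := r * #E / n
  have hr1 : (0 : ℝ) < r - 1 := by
    have : (2 : ℝ) ≤ r := by exact_mod_cast hr
    linarith
  set q : ℝ := d ^ (1 / ((r : ℝ) - 1))
  have hq : 1 ≤ q := Real.one_le_rpow hd (by positivity)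
  have hqd : q ^ (r - 1) = d := by
    rw [← Real.rpow_natCast, ← Real.rpow_mul (by positivity), Nat.cast_sub (by omega),
      Nat.cast_one, one_div_mul_cancel hr1.ne', Real.rpow_one]
  have hdeg : (r : ℝ) * #E ≤ #(univ : Finset (Fin n)) * q ^ (r - 1) := by
    rw [hqd, card_univ, Fintype.card_fin, mul_div_cancel₀ _ (by positivity)]
  obtain ⟨I, -, hI, hcard⟩ := exists_isIndependent_div_le_card (univ_nonempty_iff.2 ⟨⟨0, hn⟩⟩) hr
    (fun e _ => subset_univ e) hE hq hdeg
  refine ⟨I, hI, ?_⟩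
  rw [card_univ, Fintype.card_fin] at hcard
  convert hcard using 1
  ring
end
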